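/- The tangent cone of C₆ = {F₆ = 0} at p₁ = [-2:1:1] is a double line, and that line is the line T₁ through p₀ = [0:0:1] and p₁ (i.e. the tacnodal tangent at p₁ is T₁: x + 2y = 0). -/

import Mathlib

/-!
Translating p₁ = (-2, 1) to the origin, F₆ becomes `-400 (x + 2y)²` plus terms that are all
divisible by one of the cubic monomials `x³, x²y, xy², y³`. Those terms have no degree-2
component, so the tangent cone is `-400 (x + 2y)²`.
-/

open MvPolynomial

/-- F₆ in the affine chart z = 1. -/
noncomputable def f₆ : MvPolynomial (Fin 2) ℚ :=
  let x : MvPolynomial (Fin 2) ℚ := X 0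
  let y : MvPolynomial (Fin 2) ℚ := X 1
  4*x^6 - 273*x^4*y^2 - 258*x^2*y^4 - 481*y^6 + 720*x^4*y + 1740*x^2*y^3 +
  4020*y^5 - 520*x^4 - 3190*x^2*y^2 - 12670*y^4 + 1200*x^2*y +
  17700*y^3 + 900*x^2 - 9225*y^2

/-- Recentering at the point (a,b). -/
noncomputable def shiftAt (a b : ℚ) (f : MvPolynomial (Fin 2) ℚ) : MvPolynomial (Fin 2) ℚ :=
  aeval ![X 0 + C a, X 1 + C b] f

namespace MvPolynomial

variable {σ R : Type*} [CommSemiring R]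

theorem homogeneousComponent_mul_eq_zero_of_lt {p : MvPolynomial σ R} {m n : ℕ}
    (hp : p.IsHomogeneous m) (hnm : n < m) (q : MvPolynomial σ R) :
    homogeneousComponent n (p * q) = 0 := by
  rw [← sum_homogeneousComponent q, Finset.mul_sum, map_sum]
  refine Finset.sum_eq_zero fun i _ => ?_
  rw [homogeneousComponent_of_mem (hp.mul (homogeneousComponent_isHomogeneous i q)),
    if_neg (by omega)]

theorem homogeneousComponent_X_pow_mul_X_pow_mul_eq_zero_of_lt {i j n : ℕ} (a b : σ)
    (hn : n < i + j) (q : MvPolynomial σ R) :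
    homogeneousComponent n (X a ^ i * X b ^ j * q) = 0 :=
  homogeneousComponent_mul_eq_zero_of_lt
    ((isHomogeneous_X_pow a i).mul (isHomogeneous_X_pow b j)) hn q

end MvPolynomial

theorem shiftAt_f₆_eq :
    shiftAt (-2) 1 f₆ = C (-400) * (X 0 + 2 * X 1) ^ 2 +
      (X 0 ^ 3 * X 1 ^ 0 * (-56 - 1392 * X 1 + 2184 * X 1 ^ 2 + 167 * X 0 + 174 * X 0 * X 1
          - 273 * X 0 * X 1 ^ 2 - 48 * X 0 ^ 2 + 4 * X 0 ^ 3) +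
        X 0 ^ 2 * X 1 ^ 1 * (3184 - 6070 * X 1 + 708 * X 1 ^ 2 - 258 * X 1 ^ 3) +
        X 0 ^ 1 * X 1 ^ 2 * (6808 - 2832 * X 1 + 1032 * X 1 ^ 2) +
        X 0 ^ 0 * X 1 ^ 3 * (432 - 817 * X 1 + 1134 * X 1 ^ 2 - 481 * X 1 ^ 3)) := by
  simp only [shiftAt, f₆, map_add, map_sub, map_mul, map_pow, map_ofNat, aeval_X,
    Matrix.cons_val_zero, Matrix.cons_val_one, map_neg, map_one]
  ring

theorem isHomogeneous_C_mul_T₁_sq (c : ℚ) :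
    (C c * (X 0 + 2 * X 1) ^ 2 : MvPolynomial (Fin 2) ℚ).IsHomogeneous 2 := by
  have hline : (X 0 + 2 * X 1 : MvPolynomial (Fin 2) ℚ).IsHomogeneous 1 := by
    rw [← map_ofNat C 2]
    exact (isHomogeneous_X ℚ 0).add ((isHomogeneous_X ℚ 1).C_mul 2)
  exact (hline.pow 2).C_mul c

/-- The tangent cone of C₆ at p₁ = [-2:1:1] is a double line, namely the line
T₁ : x + 2y = 0 through p₀ and p₁ (in coordinates centered at p₁ it is x + 2y). -/
theorem stmt18 :
    ∃ c : ℚ, c ≠ 0 ∧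
      homogeneousComponent 2 (shiftAt (-2) 1 f₆) = C c * (X 0 + 2 * X 1) ^ 2 := by
  refine ⟨-400, by norm_num, ?_⟩
  rw [shiftAt_f₆_eq, map_add, homogeneousComponent_of_mem (isHomogeneous_C_mul_T₁_sq _),
    if_pos rfl]
  simp (disch := norm_num) only [map_add,
    homogeneousComponent_X_pow_mul_X_pow_mul_eq_zero_of_lt, add_zero]
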